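/- arXiv:2305.16654 — 2 statements merged into one kernel-verified Lean document; each statement's English description precedes it below -/
import Mathlib

section
/- Let m ∈ ℕ with 4 | m, r ∈ ℤ with gcd(r, m) = 1, and set ζ := e(r/m). Let r̄ ∈ ℤ with r̄ ≡ r (mod 4). Then for all integers n, n₀ ≥ 0 with n ≡ n₀ (mod m/2), one has ζ^{n(n+1)/2} = ζ^{n₀(n₀+1)/2} · e( (n − n₀)/4 + (−1)^{n₀} · (r̄/2) · (n − n₀)/m ). -/
/-!
Write `m = 4M` and `n = n₀ + 2Mk`, and let `T(n) = n(n+1)/2`. Then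
`T(n) - T(n₀) = Mk(2n₀+1) + 2M²k²`, and `r (T(n) - T(n₀))` is congruent modulo `m` to the integer
`(2M + (-1)^{n₀} r̄) Mk`, which is `m` times the argument of the correction factor `e(⋯)`:
this uses `2n₀ + 1 ≡ (-1)^{n₀}` and `r ≡ r̄ (mod 4)`, and that `k(rk - 1)` is even because `r`,
being coprime to `m`, is odd.
-/

/-- `e(x) = e^{2πix}`. -/
noncomputable def e (x : ℝ) : ℂ := Complex.exp (2 * Real.pi * Complex.I * x)

theorem e_add (x y : ℝ) : e (x + y) = e x * e y := by
  simp only [e, Complex.ofReal_add, mul_add, Complex.exp_add]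

theorem e_intCast (k : ℤ) : e k = 1 := by
  rw [e, Complex.ofReal_intCast, mul_comm, Complex.exp_int_mul_two_pi_mul_I]

theorem e_zpow (x : ℝ) (t : ℤ) : e x ^ t = e (t * x) := by
  rw [e, ← Complex.exp_int_mul, e]
  push_cast
  ring_nf

theorem e_intCast_div_eq_of_dvd {q a b : ℤ} (h : q ∣ a - b) : e (a / q) = e (b / q) := by
  obtain ⟨j, hj⟩ := h
  rcases eq_or_ne q 0 with rfl | hq
  · simp
  have : (a : ℝ) / q = b / q + j := by
    rw [eq_add_of_sub_eq' hj]
    push_cast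
    field_simp
  rw [this, e_add, e_intCast, mul_one]

theorem Int.odd_of_gcd_eq_one {r m : ℤ} (hm : 2 ∣ m) (h : Int.gcd r m = 1) : Odd r := by
  rw [← Int.not_even_iff_odd, even_iff_two_dvd]
  intro hr
  simpa [h] using Int.dvd_coe_gcd hr hm

theorem Int.cast_negOnePow_eq_neg_one_zpow {R : Type*} [DivisionRing R] (n : ℤ) :
    ((n.negOnePow : ℤ) : R) = (-1 : R) ^ n := by
  rcases Int.even_or_odd n with h | h
  · simp [h.neg_one_zpow, Int.negOnePow_even _ h]
  · simp [h.neg_one_zpow, Int.negOnePow_odd _ h]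

theorem Int.four_dvd_two_mul_add_one_sub_negOnePow (n : ℤ) : 4 ∣ 2 * n + 1 - n.negOnePow := by
  rcases Int.even_or_odd n with h | h
  · rw [Int.negOnePow_even _ h]; obtain ⟨u, rfl⟩ := h; exact ⟨u, by push_cast; ring⟩
  · rw [Int.negOnePow_odd _ h]; obtain ⟨u, rfl⟩ := h; exact ⟨u + 1, by push_cast; ring⟩

theorem Int.two_dvd_mul_mul_sub_one {r : ℤ} (hr : Odd r) (k : ℤ) : 2 ∣ k * (r * k - 1) := by
  rw [← even_iff_two_dvd]
  rcases Int.even_or_odd k with h | h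
  · exact h.mul_right _
  · exact ((hr.mul h).sub_odd odd_one).mul_left _

theorem Int.triangle_add_two_mul (n d : ℤ) :
    (n + 2 * d) * (n + 2 * d + 1) / 2 = n * (n + 1) / 2 + d * (2 * n + 1) + 2 * d ^ 2 := by
  rw [show (n + 2 * d) * (n + 2 * d + 1) = n * (n + 1) + 2 * (d * (2 * n + 1) + 2 * d ^ 2) by ring,
    Int.add_mul_ediv_left _ _ two_ne_zero]
  ring

theorem Int.four_mul_dvd_triangle_sub {M r rbar : ℤ} (hr : Odd r) (hrbar : rbar ≡ r [ZMOD 4])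
    (n k : ℤ) :
    4 * M ∣ r * ((n + 2 * (M * k)) * (n + 2 * (M * k) + 1) / 2)
      - (r * (n * (n + 1) / 2) + (2 * M + n.negOnePow * rbar) * (M * k)) := by
  obtain ⟨a, ha⟩ := Int.four_dvd_two_mul_add_one_sub_negOnePow n
  obtain ⟨b, hb⟩ := hrbar.dvd
  obtain ⟨c, hc⟩ := Int.two_dvd_mul_mul_sub_one hr k
  refine ⟨k * (r * a + n.negOnePow * b) + M * c, ?_⟩
  rw [Int.triangle_add_two_mul]
  linear_combination (M * k * r) * ha + (M * k * n.negOnePow) * hb + 2 * M ^ 2 * hc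

theorem zeta_pow_triangular_general (m : ℕ) (hm : 4 ∣ m) (r : ℤ) (hgcd : Int.gcd r m = 1)
    (ζ : ℂ) (hζ : ζ = e ((r : ℝ) / m))
    (rbar : ℤ) (hrbar : rbar % 4 = r % 4)
    (n n₀ : ℤ) (hcong : ((m / 2 : ℕ) : ℤ) ∣ n - n₀) :
    ζ ^ (n * (n + 1) / 2) =
      ζ ^ (n₀ * (n₀ + 1) / 2) *
        e (((n - n₀ : ℤ) : ℝ) / 4 +
            (-1 : ℝ) ^ n₀ * ((rbar : ℝ) / 2) * (((n - n₀ : ℤ) : ℝ) / m)) := by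
  obtain ⟨M, rfl⟩ := hm
  obtain ⟨k, hk⟩ := hcong
  obtain rfl : n = n₀ + 2 * (M * k) := by
    rw [show 4 * M / 2 = 2 * M by omega] at hk
    push_cast at hk
    linear_combination hk
  have hr : Odd r := Int.odd_of_gcd_eq_one ⟨2 * M, by push_cast; ring⟩ hgcd
  have hcorr : ((n₀ + 2 * (M * k) - n₀ : ℤ) : ℝ) / 4 + (-1 : ℝ) ^ n₀ * ((rbar : ℝ) / 2) *
      ((n₀ + 2 * (M * k) - n₀ : ℤ) / (4 * M : ℕ)) =
      ((((2 * M + n₀.negOnePow * rbar) * (M * k) : ℤ)) : ℝ) / (4 * M : ℕ) := by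
    rw [← Int.cast_negOnePow_eq_neg_one_zpow]
    rcases eq_or_ne M 0 with rfl | hM
    · simp
    · push_cast
      field_simp
      ring
  have hexponent := e_intCast_div_eq_of_dvd (Int.four_mul_dvd_triangle_sub (M := M) hr hrbar n₀ k)
  rw [hζ, e_zpow, e_zpow, hcorr, ← e_add]
  push_cast at hexponent ⊢
  convert hexponent using 2 <;> ring

/-- Lemma (part 1): for `4 ∣ m`, `gcd(r,m) = 1`, `ζ = e(r/m)`, `r̄ ≡ r (mod 4)`, and all
`n ≡ n₀ (mod m/2)` with `n, n₀ ≥ 0`, one has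
`ζ^{n(n+1)/2} = ζ^{n₀(n₀+1)/2} · e((n−n₀)/4 + (−1)^{n₀}·(r̄/2)·(n−n₀)/m)`. -/
theorem zeta_pow_triangular (m : ℕ) (hm : 4 ∣ m) (r : ℤ) (hgcd : Int.gcd r m = 1)
    (ζ : ℂ) (hζ : ζ = e ((r : ℝ) / m))
    (rbar : ℤ) (hrbar : rbar % 4 = r % 4)
    (n n₀ : ℤ) (hn : 0 ≤ n) (hn₀ : 0 ≤ n₀) (hcong : ((m / 2 : ℕ) : ℤ) ∣ n - n₀) :
    ζ ^ (n * (n + 1) / 2) =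
      ζ ^ (n₀ * (n₀ + 1) / 2) *
        e (((n - n₀ : ℤ) : ℝ) / 4 +
            (-1 : ℝ) ^ n₀ * ((rbar : ℝ) / 2) * (((n - n₀ : ℤ) : ℝ) / m)) :=
  zeta_pow_triangular_general m hm r hgcd ζ hζ rbar hrbar n n₀ hcong
end

section
/- For every c > 0, the set { n ∈ ℕ : |cos(√(2|V|·n)) + (−1)^{n+1}·sin(√(2|V|·n))| ≤ e^{−c√n} } has natural density zero. (The equidistribution/discrepancy estimate in Section 5 of the proof showing that the trigonometric factor in the main term of V₁(n) is exponentially small only on a density-zero set of n.) -/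
/-- `|V| = (1/8) Σ_{n=1}^∞ sin(nπ/3)/n²`. -/
noncomputable def Vabs : ℝ :=
  (1 / 8) * ∑' n : ℕ, Real.sin ((n + 1) * Real.pi / 3) / (n + 1) ^ 2

open scoped Classical in
/-- `S ⊆ ℕ` has natural density `d` if `#(S ∩ [0,N]) / N → d` as `N → ∞`. -/
def HasNatDensity (S : Set ℕ) (d : ℝ) : Prop :=
  Filter.Tendsto
    (fun N : ℕ => (((Finset.range (N + 1)).filter (fun n => n ∈ S)).card : ℝ) / N)
    Filter.atTop (nhds d)

/-!
Write `x = a √n` and `s = ±1`. Since `(cos x + s sin x) (cos x - s sin x) = cos 2x`, the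
factor `|cos x + s sin x|` is at most `ε` only if `|cos 2x| ≤ 2ε`, i.e. only if `2x` lies
within `π ε` of a zero `π / 2 + k π` of `cos`. For `√N < n ≤ N` we may take
`ε = exp (-c N^{1/4})`, while distinct `n, m ≤ N` satisfy `|√n - √m| ≥ 1 / (2 √N)`; as
`√N exp (-c N^{1/4}) → 0`, eventually each zero is approached by at most one such `n`, and
only `O(a √N)` zeros lie in `[0, 2a √N]`. So the set meets `[0, N]` in `O(√N)` points.

Because `√(2 |V| n) = √(2 |V|) √n` holds for every real `|V|` (`√` of a negative is `0`), the
sign of `|V|` is never needed: frequency `0` just gives a set contained in `{0}`.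
-/

open Real Filter Finset Topology

noncomputable def nearestCosZeroIndex (y : ℝ) : ℤ := round ((y - π / 2) / π)

lemma abs_sub_nearestCosZero_le (y : ℝ) :
    |y - (π / 2 + nearestCosZeroIndex y * π)| ≤ π / 2 * |cos y| := by
  set k := nearestCosZeroIndex y
  set u := y - (π / 2 + k * π) with hu
  have hu_le : |u| ≤ π / 2 := by
    have h : |(y - π / 2) / π - k| ≤ 1 / 2 := abs_sub_round _
    rw [show (y - π / 2) / π - k = u / π by field_simp; ring, abs_div, abs_of_pos pi_pos,
      div_le_iff₀ pi_pos] at h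
    linarith
  have hcos : |cos y| = |sin u| := by
    rw [show y = u + π / 2 + k * π by ring, cos_add_int_mul_pi, cos_add_pi_div_two, abs_mul,
      abs_neg_one_zpow, one_mul, abs_neg]
  calc |u| = π / 2 * (2 / π * |u|) := by field_simp
    _ ≤ π / 2 * |cos y| := by rw [hcos]; gcongr; exact mul_abs_le_abs_sin hu_le

lemma nearestCosZeroIndex_mem_Icc {y L : ℝ} (hy : y ∈ Set.Icc 0 L) :
    nearestCosZeroIndex y ∈ Icc (-1) ⌊L / π⌋ := by
  have hlow := sub_half_lt_round ((y - π / 2) / π)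
  have hup := round_le_add_half ((y - π / 2) / π)
  have hy0 : -1 / 2 ≤ (y - π / 2) / π := by
    rw [le_div_iff₀ pi_pos]; linarith [hy.1]
  have hyL : (y - π / 2) / π + 1 / 2 ≤ L / π := by
    rw [div_add' _ _ _ pi_pos.ne']; gcongr; linarith [hy.2]
  refine mem_Icc.2 ⟨?_, Int.le_floor.2 (hup.trans hyL)⟩
  have : (-2 : ℝ) < nearestCosZeroIndex y := by unfold nearestCosZeroIndex; linarith
  exact_mod_cast this

lemma card_le_of_abs_cos_le {ι : Type*} (T : Finset ι) (y : ι → ℝ) {L ε : ℝ}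
    (hy : ∀ i ∈ T, y i ∈ Set.Icc 0 L) (hcos : ∀ i ∈ T, |cos (y i)| ≤ ε)
    (hsep : ∀ i ∈ T, ∀ j ∈ T, i ≠ j → π * ε < |y i - y j|) :
    #T ≤ ⌊L / π⌋₊ + 2 := by
  have hnear : ∀ i ∈ T, |y i - (π / 2 + nearestCosZeroIndex (y i) * π)| ≤ π / 2 * ε :=
    fun i hi => (abs_sub_nearestCosZero_le (y i)).trans (by gcongr; exact hcos i hi)
  have hinj : Set.InjOn (nearestCosZeroIndex ∘ y) T := by
    intro i hi j hj hij
    by_contra hne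
    have hi' := hnear i hi
    rw [show nearestCosZeroIndex (y i) = nearestCosZeroIndex (y j) from hij] at hi'
    linarith [hsep i hi j hj hne, abs_sub_le (y i) (π / 2 + nearestCosZeroIndex (y j) * π) (y j),
      abs_sub_comm (y j) (π / 2 + nearestCosZeroIndex (y j) * π), hnear j hj]
  have hcard := card_le_card_of_injOn _ (fun i hi => nearestCosZeroIndex_mem_Icc (hy i hi)) hinj
  rw [Int.card_Icc] at hcard
  have := Int.floor_toNat (L / π)
  omega

lemma abs_cos_two_mul_le {x s ε : ℝ} (hs : |s| = 1) (h : |cos x + s * sin x| ≤ ε) :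
    |cos (2 * x)| ≤ 2 * ε := by
  have hs2 : s ^ 2 = 1 := by rw [← sq_abs, hs, one_pow]
  have hfactor : cos (2 * x) = (cos x + s * sin x) * (cos x - s * sin x) := by
    rw [cos_two_mul]; linear_combination sin x ^ 2 * hs2 + sin_sq_add_cos_sq x
  have hconj : |cos x - s * sin x| ≤ 2 := by
    calc |cos x - s * sin x| ≤ |cos x| + |s * sin x| := abs_sub _ _
      _ ≤ 1 + 1 := by rw [abs_mul, hs, one_mul]; gcongr <;> simp [abs_cos_le_one, abs_sin_le_one]
      _ = 2 := by norm_num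
  rw [hfactor, abs_mul, mul_comm 2]
  exact mul_le_mul h hconj (abs_nonneg _) ((abs_nonneg _).trans h)

lemma one_le_two_mul_sqrt_mul_abs_sqrt_sub_sqrt {m n N : ℕ} (hmn : m ≠ n) (hm : m ≤ N)
    (hn : n ≤ N) : 1 ≤ 2 * √N * |√m - √n| := by
  have hone : (1 : ℝ) ≤ |(m : ℝ) - n| := by
    have : (1 : ℤ) ≤ |(m : ℤ) - n| := Int.one_le_abs (sub_ne_zero.2 (by exact_mod_cast hmn))
    exact_mod_cast this
  have hdiff : (m : ℝ) - n = (√m - √n) * (√m + √n) := by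
    ring_nf; simp only [sq_sqrt, Nat.cast_nonneg]
  have hmN := sqrt_le_sqrt (Nat.cast_le (α := ℝ).2 hm)
  have hnN := sqrt_le_sqrt (Nat.cast_le (α := ℝ).2 hn)
  calc 1 ≤ |(m : ℝ) - n| := hone
    _ = |√m - √n| * (√m + √n) := by
        rw [hdiff, abs_mul, abs_of_nonneg (by positivity : (0 : ℝ) ≤ √m + √n)]
    _ ≤ |√m - √n| * (2 * √N) := by gcongr; linarith
    _ = 2 * √N * |√m - √n| := by ring

open scoped Classical in
lemma hasNatDensity_zero_of_card_le_mul_sqrt {S : Set ℕ} (C : ℝ)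
    (h : ∀ᶠ N in atTop, (#{n ∈ range (N + 1) | n ∈ S} : ℝ) ≤ C * √N) : HasNatDensity S 0 := by
  unfold HasNatDensity
  refine squeeze_zero' (g := fun N : ℕ => C / √N) (.of_forall fun N => by positivity) ?_
    (tendsto_const_nhds.div_atTop (tendsto_sqrt_atTop.comp tendsto_natCast_atTop_atTop))
  filter_upwards [h] with N hN
  calc (#{n ∈ range (N + 1) | n ∈ S} : ℝ) / N ≤ C * √N / N := by gcongr
    _ = C / √N := by rw [mul_div_assoc, sqrt_div_self', mul_one_div]

open scoped Classical in
lemma hasNatDensity_zero_of_finite {S : Set ℕ} (hS : S.Finite) : HasNatDensity S 0 := by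
  refine hasNatDensity_zero_of_card_le_mul_sqrt #hS.toFinset ?_
  filter_upwards [eventually_ge_atTop 1] with N hN
  have hsub : #{n ∈ range (N + 1) | n ∈ S} ≤ #hS.toFinset :=
    card_le_card fun n hn => by simpa using (mem_filter.1 hn).2
  have hN : (1 : ℝ) ≤ √N := by simpa using sqrt_le_sqrt (Nat.one_le_cast.2 hN)
  calc (#{n ∈ range (N + 1) | n ∈ S} : ℝ) ≤ #hS.toFinset * 1 := by rw [mul_one]; exact_mod_cast hsub
    _ ≤ #hS.toFinset * √N := by gcongr

lemma tendsto_sqrt_mul_exp_neg_mul_sqrt_sqrt {c : ℝ} (hc : 0 < c) :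
    Tendsto (fun x : ℝ => √x * exp (-c * √(√x))) atTop (𝓝 0) := by
  refine ((tendsto_rpow_mul_exp_neg_mul_atTop_nhds_zero 2 c hc).comp
    (tendsto_sqrt_atTop.comp tendsto_sqrt_atTop)).congr fun x => ?_
  simp only [Function.comp_apply, rpow_two, sq_sqrt (sqrt_nonneg x)]

def trigFactorExpSmall (a : ℝ) (s : ℕ → ℝ) (c : ℝ) : Set ℕ :=
  {n | |cos (a * √n) + s n * sin (a * √n)| ≤ exp (-c * √n)}

open scoped Classical in
lemma card_trigFactorExpSmall_Ioc_sqrt_le {a c : ℝ} {s : ℕ → ℝ} (hs : ∀ n, |s n| = 1)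
    (ha : 0 < a) (hc : 0 ≤ c) {N : ℕ} (hN : 2 * π * (√N * exp (-c * √(√N))) < a) :
    #{n ∈ Ioc (Nat.sqrt N) N | n ∈ trigFactorExpSmall a s c} ≤ ⌊2 * (a * √N) / π⌋₊ + 2 := by
  set E := exp (-c * √(√N))
  refine card_le_of_abs_cos_le _ (fun n : ℕ => 2 * (a * √n)) (ε := 2 * E) ?_ ?_ ?_
  · intro n hn
    have hnN : n ≤ N := (mem_Ioc.1 (mem_filter.1 hn).1).2
    exact ⟨by positivity, by gcongr⟩
  · intro n hn
    obtain ⟨hnK, hsmall⟩ := mem_filter.1 hn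
    refine (abs_cos_two_mul_le (hs n) hsmall).trans ?_
    have : √(√N) ≤ √n :=
      sqrt_le_sqrt (real_sqrt_lt_nat_sqrt_succ.le.trans (by exact_mod_cast (mem_Ioc.1 hnK).1))
    exact mul_le_mul_of_nonneg_left (exp_le_exp.2 (by nlinarith)) zero_le_two
  · intro n hn m hm hnm
    have hd := one_le_two_mul_sqrt_mul_abs_sqrt_sub_sqrt hnm (mem_Ioc.1 (mem_filter.1 hn).1).2
      (mem_Ioc.1 (mem_filter.1 hm).1).2
    show π * (2 * E) < |2 * (a * √n) - 2 * (a * √m)|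
    rw [← mul_sub, ← mul_sub, abs_mul, abs_mul, abs_two, abs_of_pos ha]
    have hdpos : 0 < |√n - √m| := by
      by_contra! h; nlinarith [abs_nonneg (√n - √m), sqrt_nonneg (N : ℝ)]
    calc π * (2 * E) ≤ π * (2 * E) * (2 * √N * |√n - √m|) :=
          le_mul_of_one_le_right (by positivity) hd
      _ = 2 * π * (√N * E) * (2 * |√n - √m|) := by ring
      _ < a * (2 * |√n - √m|) := by gcongr
      _ = 2 * (a * |√n - √m|) := by ring

open scoped Classical in
lemma eventually_card_trigFactorExpSmall_le {a c : ℝ} {s : ℕ → ℝ} (hs : ∀ n, |s n| = 1)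
    (ha : 0 < a) (hc : 0 < c) :
    ∀ᶠ N : ℕ in atTop,
      (#{n ∈ range (N + 1) | n ∈ trigFactorExpSmall a s c} : ℝ) ≤ (2 * a / π + 4) * √N := by
  have hsmall := (tendsto_sqrt_mul_exp_neg_mul_sqrt_sqrt hc).comp tendsto_natCast_atTop_atTop
  filter_upwards [hsmall.eventually (gt_mem_nhds (by positivity : 0 < a / (2 * π))),
    eventually_ge_atTop 1] with N hN hN1
  rw [Function.comp_apply, lt_div_iff₀ (by positivity), mul_comm] at hN
  have htail := card_trigFactorExpSmall_Ioc_sqrt_le hs ha hc.le hN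
  set K := Nat.sqrt N
  have hsplit : {n ∈ range (N + 1) | n ∈ trigFactorExpSmall a s c} ⊆
      range (K + 1) ∪ {n ∈ Ioc K N | n ∈ trigFactorExpSmall a s c} := by
    intro n hn
    obtain ⟨hnN, hnS⟩ := mem_filter.1 hn
    have := mem_range.1 hnN
    rcases le_or_gt n K with hnK | hnK
    · exact mem_union_left _ (mem_range.2 (by omega))
    · exact mem_union_right _ (mem_filter.2 ⟨mem_Ioc.2 ⟨hnK, by omega⟩, hnS⟩)
  have hcard := (card_le_card hsplit).trans (card_union_le _ _)
  rw [card_range] at hcard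
  have hK : (K : ℝ) ≤ √N := nat_sqrt_le_real_sqrt
  have hfloor : (⌊2 * (a * √N) / π⌋₊ : ℝ) ≤ 2 * (a * √N) / π := Nat.floor_le (by positivity)
  have hN1' : (1 : ℝ) ≤ √N := by simpa using sqrt_le_sqrt (Nat.one_le_cast.2 hN1)
  calc (#{n ∈ range (N + 1) | n ∈ trigFactorExpSmall a s c} : ℝ)
      ≤ (K + 1) + (⌊2 * (a * √N) / π⌋₊ + 2) := by exact_mod_cast hcard.trans (by omega)
    _ ≤ (2 * a / π + 4) * √N := by
        have : (2 * a / π + 4) * √N = 2 * (a * √N) / π + 4 * √N := by ring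
        linarith

lemma hasNatDensity_trigFactorExpSmall {a c : ℝ} {s : ℕ → ℝ} (hs : ∀ n, |s n| = 1)
    (ha : 0 ≤ a) (hc : 0 < c) : HasNatDensity (trigFactorExpSmall a s c) 0 := by
  rcases ha.eq_or_lt with rfl | ha
  · refine hasNatDensity_zero_of_finite ((Set.finite_singleton 0).subset fun n hn => ?_)
    simp only [trigFactorExpSmall, zero_mul, cos_zero, sin_zero, mul_zero, add_zero, abs_one,
      neg_mul, one_le_exp_iff, Left.nonneg_neg_iff, Set.mem_ofPred_eq] at hn
    have hsqrt : √(n : ℝ) ≤ 0 := nonpos_of_mul_nonpos_right hn hc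
    exact Nat.cast_nonpos.1 (sqrt_eq_zero'.1 (hsqrt.antisymm (sqrt_nonneg _)))
  · exact hasNatDensity_zero_of_card_le_mul_sqrt _ (eventually_card_trigFactorExpSmall_le hs ha hc)

/-- The trigonometric factor of the main term of `V₁(n)` is exponentially small only on a
set of natural density zero. -/
theorem trig_factor_small_density_zero (c : ℝ) (hc : 0 < c) :
    HasNatDensity
      {n : ℕ |
        |Real.cos (Real.sqrt (2 * Vabs * n)) +
            (-1 : ℝ) ^ (n + 1) * Real.sin (Real.sqrt (2 * Vabs * n))| ≤
          Real.exp (-c * Real.sqrt n)} 0 := by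
  convert hasNatDensity_trigFactorExpSmall (a := √(2 * Vabs)) (s := fun n => (-1) ^ (n + 1))
    (fun n => by simp) (sqrt_nonneg _) hc using 1
  ext n
  simp only [trigFactorExpSmall, Set.mem_ofPred_eq, sqrt_mul' _ n.cast_nonneg]
end
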